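/- Let X be a real Banach space and let x ∈ S_X. Then x is a weakly almost locally uniformly rotund (w-aLUR) point of S_X if and only if x (viewed via the canonical embedding of X into its bidual X**) is a rotund point of the closed unit ball B_{X**} of the bidual. -/

import Mathlib

/-
Given w-aLUR data `(xₙ, fₘ, αₘ)`, along any ultrafilter the sequence `xₙ` has a weak* limit `F`
in the unit ball of `X**` (Banach–Alaoglu). Since `(Jx + F)(fₘ) = 2αₘ → 2`, `‖Jx + F‖ = 2`, and
rotundity of `Jx` forces `F = Jx`; hence `xₙ ⇀ x`.

Conversely, let `‖v‖ = 1` in `X**` with `‖Jx + v‖ = 2`, and let `fₘ` be a norming sequence for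
`Jx + v`. For fixed `g ∈ X*`, Helly's lemma (Hahn–Banach in the finite-dimensional range of
`y ↦ (f(y))_{f ∈ s}`, a quantitative Goldstine theorem) yields unit vectors `yₙ ∈ X` with
`f(yₙ) → v(f)` for all `f ∈ {g, f₀, f₁, …}`. With `αₘ = (Jx + v)(fₘ)/2 → 1` these are w-aLUR
data for `x`, so `g(yₙ) → g(x)`, i.e. `v(g) = g(x)`.
-/

open Filter Topology NormedSpace

/-- `x` is a weakly almost locally uniformly rotund (w-aLUR) point of the unit sphere:
under the aLUR double-limit condition the sequence `{x_n}` converges weakly to `x`. -/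
def WALURPoint {Z : Type*} [NormedAddCommGroup Z] [NormedSpace ℝ Z] (x : Z) : Prop :=
  ∀ (xs : ℕ → Z) (fs : ℕ → StrongDual ℝ Z) (α : ℕ → ℝ),
    (∀ n, ‖xs n‖ = 1) → (∀ m, ‖fs m‖ = 1) →
    (∀ m, Tendsto (fun n => fs m ((2 : ℝ)⁻¹ • (xs n + x))) atTop (𝓝 (α m))) →
    Tendsto α atTop (𝓝 1) →
    ∀ g : StrongDual ℝ Z, Tendsto (fun n => g (xs n)) atTop (𝓝 (g x))

/-- `u` (with `‖u‖ = 1`) is a rotund point of the closed unit ball of `Z`: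
any norm-one `v` with `‖u + v‖ = 2` equals `u`. -/
def RotundPoint {Z : Type*} [NormedAddCommGroup Z] [NormedSpace ℝ Z] (u : Z) : Prop :=
  ∀ v : Z, ‖v‖ = 1 → ‖u + v‖ = 2 → v = u

theorem RotundPoint.eq_of_norm_le {Z : Type*} [NormedAddCommGroup Z] [NormedSpace ℝ Z] {u v : Z}
    (hR : RotundPoint u) (hu : ‖u‖ ≤ 1) (hv : ‖v‖ ≤ 1) (huv : 2 ≤ ‖u + v‖) : v = u := by
  have := norm_add_le u v
  exact hR v (by linarith) (by linarith)

namespace ContinuousLinearMap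

variable {E : Type*} [NormedAddCommGroup E] [NormedSpace ℝ E]

theorem le_opNorm_of_tendsto {ι : Type*} {l : Filter ι} [l.NeBot] (T : StrongDual ℝ E)
    {z : ι → E} (hz : ∀ i, ‖z i‖ ≤ 1) {c : ℝ} (h : Tendsto (fun i => T (z i)) l (𝓝 c)) :
    c ≤ ‖T‖ :=
  le_of_tendsto h
    (.of_forall fun i => (le_abs_self _).trans (by simpa using T.le_opNorm_of_le (hz i)))

theorem exists_norm_eq_one_lt_apply (T : StrongDual ℝ E) {r : ℝ} (hr : 0 ≤ r) (hT : r < ‖T‖) :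
    ∃ z : E, ‖z‖ = 1 ∧ r < T z := by
  obtain ⟨z, hz, hTz⟩ := T.exists_lt_apply_of_lt_opNorm hT
  obtain ⟨w, hw, hTw⟩ : ∃ w : E, ‖w‖ < 1 ∧ r < T w := by
    rcases le_or_gt 0 (T z) with h | h
    · exact ⟨z, hz, by rwa [Real.norm_eq_abs, abs_of_nonneg h] at hTz⟩
    · exact ⟨-z, by rwa [norm_neg], by rwa [map_neg, ← abs_of_neg h, ← Real.norm_eq_abs]⟩
  have hw0 : w ≠ 0 := by rintro rfl; rw [map_zero] at hTw; linarith
  refine ⟨‖w‖⁻¹ • w, norm_smul_inv_norm hw0, ?_⟩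
  rw [map_smul, smul_eq_mul]
  exact hTw.trans_le (le_mul_of_one_le_left (hr.trans hTw.le)
    (one_le_inv₀ (norm_pos_iff.2 hw0) |>.2 hw.le))

theorem exists_seq_norm_eq_one_tendsto_opNorm (T : StrongDual ℝ E) (hT : T ≠ 0) :
    ∃ z : ℕ → E, (∀ n, ‖z n‖ = 1) ∧ Tendsto (fun n => T (z n)) atTop (𝓝 ‖T‖) := by
  obtain ⟨r, -, hr, hrT⟩ := exists_seq_strictMono_tendsto' (norm_pos_iff.2 hT)
  choose z hz hTz using fun n => T.exists_norm_eq_one_lt_apply (hr n).1.le (hr n).2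
  refine ⟨z, hz, tendsto_of_tendsto_of_tendsto_of_le_of_le hrT tendsto_const_nhds
    (fun n => (hTz n).le) fun n => ?_⟩
  simpa [hz n] using (le_abs_self _).trans (T.le_opNorm (z n))

end ContinuousLinearMap

section Bidual

variable {X : Type*} [NormedAddCommGroup X] [NormedSpace ℝ X]

theorem pi_apply_mem_closure_image_closedBall {ι : Type*} [Fintype ι]
    (F : StrongDual ℝ (StrongDual ℝ X)) (φ : ι → StrongDual ℝ X) {r : ℝ} (hr : ‖F‖ < r) :
    (fun i => F (φ i)) ∈ closure (ContinuousLinearMap.pi φ '' Metric.closedBall 0 r) := by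
  classical
  by_contra hc
  set T : X →L[ℝ] ι → ℝ := ContinuousLinearMap.pi φ
  obtain ⟨ℓ, u, hsep, hu⟩ := geometric_hahn_banach_closed_point
    ((convex_closedBall (0 : X) r).linear_image T.toLinearMap).closure isClosed_closure hc
  set ψ : StrongDual ℝ X := ℓ.comp T
  have hψ : ∀ y ∈ Metric.closedBall (0 : X) r, ψ y < u := fun y hy =>
    hsep _ (subset_closure ⟨y, hy, rfl⟩)
  have hr0 : 0 < r := (norm_nonneg F).trans_lt hr
  have hψnorm : ‖ψ‖ ≤ u / r := by
    refine ψ.opNorm_bound_of_ball_bound hr0 u fun y hy => abs_le.2 ⟨?_, (hψ y hy).le⟩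
    have : -ψ y < u := by simpa using hψ (-y) (by simpa using hy)
    linarith
  have hFψ : F ψ = ℓ (fun i => F (φ i)) := by
    have hsum : ψ = ∑ i, ℓ (Pi.single i 1) • φ i := by
      ext y
      conv_lhs => rw [ContinuousLinearMap.comp_apply, pi_eq_sum_univ' (T y)]
      simp [T, mul_comm]
    conv_rhs => rw [pi_eq_sum_univ' fun i => F (φ i)]
    simp [hsum, mul_comm]
  have : ℓ (fun i => F (φ i)) ≤ u := calc
    ℓ (fun i => F (φ i)) = F ψ := hFψ.symm
    _ ≤ ‖F‖ * ‖ψ‖ := (le_abs_self _).trans (F.le_opNorm ψ)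
    _ ≤ r * (u / r) := by gcongr
    _ = u := mul_div_cancel₀ u hr0.ne'
  linarith

theorem exists_seq_norm_le_tendsto_apply (F : StrongDual ℝ (StrongDual ℝ X))
    {S : Set (StrongDual ℝ X)} (hS : S.Countable) :
    ∃ y : ℕ → X, (∀ n : ℕ, ‖y n‖ ≤ ‖F‖ + 1 / (n + 1)) ∧
      ∀ f ∈ S, Tendsto (fun n => f (y n)) atTop (𝓝 (F f)) := by
  obtain ⟨g, hg⟩ := Set.countable_iff_exists_subset_range.1 hS
  have hy : ∀ n : ℕ, ∃ y : X, ‖y‖ ≤ ‖F‖ + 1 / (n + 1) ∧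
      ∀ k : Fin (n + 1), dist (g k y) (F (g k)) < 1 / (n + 1) := by
    intro n
    obtain ⟨_, ⟨y, hy, rfl⟩, hdist⟩ := Metric.mem_closure_iff.1
      (pi_apply_mem_closure_image_closedBall F (fun k : Fin (n + 1) => g k)
        (lt_add_of_pos_right _ Nat.one_div_pos_of_nat)) _ Nat.one_div_pos_of_nat
    refine ⟨y, mem_closedBall_zero_iff.1 hy, fun k => ?_⟩
    rw [dist_comm] at hdist
    exact (dist_le_pi_dist _ _ k).trans_lt hdist
  choose y hyF hyg using hy
  refine ⟨y, hyF, fun f hf => ?_⟩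
  obtain ⟨k, rfl⟩ := hg hf
  refine tendsto_iff_dist_tendsto_zero.2 (squeeze_zero' (.of_forall fun _ => dist_nonneg) ?_
    tendsto_one_div_add_atTop_nhds_zero_nat)
  filter_upwards [eventually_ge_atTop k] with n hn
  exact (hyg n ⟨k, Nat.lt_succ_of_le hn⟩).le

theorem exists_seq_norm_eq_one_tendsto_apply (F : StrongDual ℝ (StrongDual ℝ X)) (hF : ‖F‖ = 1)
    {S : Set (StrongDual ℝ X)} (hS : S.Countable) :
    ∃ y : ℕ → X, (∀ n, ‖y n‖ = 1) ∧ ∀ f ∈ S, Tendsto (fun n => f (y n)) atTop (𝓝 (F f)) := by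
  obtain ⟨h, hh, hFh⟩ :=
    F.exists_seq_norm_eq_one_tendsto_opNorm (norm_ne_zero_iff.1 (by simp [hF]))
  obtain ⟨z, hzF, hz⟩ := exists_seq_norm_le_tendsto_apply F (hS.union (Set.countable_range h))
  have hz_norm : Tendsto (fun n => ‖z n‖) atTop (𝓝 1) := by
    refine tendsto_order.2 ⟨fun a ha => ?_, fun b hb => ?_⟩
    · obtain ⟨k, hk⟩ := (hFh.eventually (lt_mem_nhds (hF ▸ ha))).exists
      filter_upwards [(hz (h k) (.inr ⟨k, rfl⟩)).eventually (lt_mem_nhds hk)] with n hn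
      exact hn.trans_le (by simpa [hh k] using (le_abs_self _).trans ((h k).le_opNorm (z n)))
    · have hlim : Tendsto (fun n : ℕ => ‖F‖ + 1 / ((n : ℝ) + 1)) atTop (𝓝 1) := by
        simpa [hF] using tendsto_one_div_add_atTop_nhds_zero_nat.const_add ‖F‖
      filter_upwards [hlim.eventually (gt_mem_nhds hb)] with n hn
      exact (hzF n).trans_lt hn
  obtain ⟨N, hN⟩ := eventually_atTop.1 (hz_norm.eventually (lt_mem_nhds zero_lt_one))
  refine ⟨fun n => ‖z (n + N)‖⁻¹ • z (n + N), fun n => ?_, fun f hf => ?_⟩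
  · exact norm_smul_inv_norm (norm_pos_iff.1 (hN _ (Nat.le_add_left N n)))
  · have := (hz_norm.inv₀ one_ne_zero).mul (hz f (.inl hf))
    simpa using (tendsto_add_atTop_iff_nat N).2 this

theorem exists_norm_le_tendsto_apply_of_ultrafilter {ι : Type*} (U : Ultrafilter ι) (u : ι → X)
    {r : ℝ} (hu : ∀ i, ‖u i‖ ≤ r) :
    ∃ F : StrongDual ℝ (StrongDual ℝ X), ‖F‖ ≤ r ∧
      ∀ f, Tendsto (fun i => f (u i)) U (𝓝 (F f)) := by
  set w : ι → WeakDual ℝ (StrongDual ℝ X) :=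
    fun i => StrongDual.toWeakDual (inclusionInDoubleDual ℝ X (u i))
  have hw : (U.map w : Filter (WeakDual ℝ (StrongDual ℝ X))) ≤
      𝓟 (WeakDual.toStrongDual ⁻¹' Metric.closedBall 0 r) := by
    refine le_principal_iff.2 (mem_map.2 (univ_mem' fun i => ?_))
    simp only [Set.mem_preimage, Metric.mem_closedBall]
    exact (dist_zero_right (inclusionInDoubleDual ℝ X (u i))).trans_le
      ((double_dual_bound ℝ X (u i)).trans (hu i))
  obtain ⟨F, hF, hlim⟩ := (WeakDual.isCompact_closedBall 0 r).ultrafilter_le_nhds _ hw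
  exact ⟨WeakDual.toStrongDual F, mem_closedBall_zero_iff.1 hF,
    fun f => ((WeakDual.eval_continuous f).tendsto F).comp hlim⟩

theorem Filter.Tendsto.apply_midpoint {ι : Type*} {l : Filter ι} {f : StrongDual ℝ X}
    {y : ι → X} {c : ℝ} (h : Tendsto (fun n => f (y n)) l (𝓝 c)) (x : X) :
    Tendsto (fun n => f ((2 : ℝ)⁻¹ • (y n + x))) l (𝓝 ((2 : ℝ)⁻¹ * (c + f x))) := by
  simpa [mul_add] using (h.add_const (f x)).const_mul (2 : ℝ)⁻¹

theorem WALURPoint.rotundPoint_inclusionInDoubleDual {x : X} (hW : WALURPoint x) :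
    RotundPoint (inclusionInDoubleDual ℝ X x) := by
  intro v hv hxv
  set T := inclusionInDoubleDual ℝ X x + v
  obtain ⟨fs, hfs, hTfs⟩ :=
    T.exists_seq_norm_eq_one_tendsto_opNorm (norm_ne_zero_iff.1 (by simp [T, hxv]))
  ext g
  obtain ⟨y, hy, hyv⟩ := exists_seq_norm_eq_one_tendsto_apply v hv
    ((Set.countable_range fs).insert g)
  have hα m := (hyv (fs m) (.inr ⟨m, rfl⟩)).apply_midpoint x
  have hα1 : Tendsto (fun m => (2 : ℝ)⁻¹ * (v (fs m) + fs m x)) atTop (𝓝 1) := by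
    convert hTfs.const_mul (2 : ℝ)⁻¹ using 2 with m
    · simp [T, add_comm]
    · norm_num [hxv]
  exact tendsto_nhds_unique (hyv g (.inl rfl)) (hW y fs _ hy hfs hα hα1 g)

theorem RotundPoint.wALURPoint_of_inclusionInDoubleDual {x : X} (hx : ‖x‖ ≤ 1)
    (hR : RotundPoint (inclusionInDoubleDual ℝ X x)) : WALURPoint x := by
  intro xs fs α hxs hfs hα hα1 g
  refine tendsto_iff_ultrafilter _ _ _ |>.2 fun U hU => ?_
  obtain ⟨F, hF, hFxs⟩ := exists_norm_le_tendsto_apply_of_ultrafilter U xs fun n => (hxs n).le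
  have hxF : ∀ m, (inclusionInDoubleDual ℝ X x + F) (fs m) = 2 * α m := by
    intro m
    rw [tendsto_nhds_unique ((hα m).mono_left hU) ((hFxs (fs m)).apply_midpoint x)]
    simp [add_comm]
  have hFx : F = inclusionInDoubleDual ℝ X x := by
    refine hR.eq_of_norm_le ((double_dual_bound ℝ X x).trans hx) hF ?_
    refine ContinuousLinearMap.le_opNorm_of_tendsto _ (l := atTop) (fun m => (hfs m).le) ?_
    simpa [hxF] using hα1.const_mul 2
  simpa [hFx] using hFxs g

end Bidual

theorem wALUR_iff_rotund_in_bidual_general {X : Type*} [NormedAddCommGroup X] [NormedSpace ℝ X]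
    (x : X) (hx : ‖x‖ = 1) :
    WALURPoint x ↔ RotundPoint (inclusionInDoubleDual ℝ X x) :=
  ⟨WALURPoint.rotundPoint_inclusionInDoubleDual,
    RotundPoint.wALURPoint_of_inclusionInDoubleDual hx.le⟩

/-- `x ∈ S_X` is a w-aLUR point of `S_X` if and only if the canonical image of `x` in the
bidual `X**` is a rotund point of the closed unit ball of `X**`. -/
theorem wALUR_iff_rotund_in_bidual {X : Type*} [NormedAddCommGroup X] [NormedSpace ℝ X]
    [CompleteSpace X] (x : X) (hx : ‖x‖ = 1) :
    WALURPoint x ↔ RotundPoint (inclusionInDoubleDual ℝ X x) :=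
  wALUR_iff_rotund_in_bidual_general x hx
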